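/- arXiv:1609.00971 — 3 statements merged into one kernel-verified Lean document; each statement's English description precedes it below -/
import Mathlib

section
/- For real numbers x, y with |x| ≤ π/2, one has |sin(x+iy)| ≥ (√2/π)·|x+iy|. -/
/-! Since `‖sin (x + y I)‖² = sin² x + sinh² y`, it suffices to compare the two summands:
Jordan's inequality `(2/π)|x| ≤ |sin x|` bounds the first, and `|y| ≤ |sinh y|` together with
`2/π² ≤ 1` the second. -/

open Complex Real

theorem Complex.sq_norm_sin_add_mul_I (x y : ℝ) :
    ‖sin (x + y * I)‖ ^ 2 = Real.sin x ^ 2 + Real.sinh y ^ 2 := by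
  have hsplit : sin (x + y * I) =
      ((Real.sin x * Real.cosh y : ℝ) : ℂ) + ((Real.cos x * Real.sinh y : ℝ) : ℂ) * I := by
    rw [sin_add_mul_I]
    push_cast
    ring
  rw [hsplit, Complex.sq_norm, normSq_add_mul_I]
  nlinarith [Real.sin_sq_add_cos_sq x, Real.cosh_sq y]

theorem Real.abs_le_abs_sinh (y : ℝ) : |y| ≤ |Real.sinh y| := by
  rw [abs_sinh]
  exact self_le_sinh_iff.2 (abs_nonneg y)

theorem stmt_0 (x y : ℝ) (hx : |x| ≤ Real.pi / 2) :
    Real.sqrt 2 / Real.pi * ‖(x + y * Complex.I : ℂ)‖ ≤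
      ‖Complex.sin (x + y * Complex.I)‖ := by
  have hx_sq : (2 / π * x) ^ 2 ≤ Real.sin x ^ 2 := by
    rw [sq_le_sq, abs_mul, abs_of_pos (by positivity : 0 < 2 / π)]
    exact mul_abs_le_abs_sin hx
  have hy_sq : y ^ 2 ≤ Real.sinh y ^ 2 := sq_le_sq.2 (abs_le_abs_sinh y)
  have hπ_sq : 2 / π ^ 2 ≤ 1 := by
    rw [div_le_one (by positivity)]
    nlinarith [pi_gt_three]
  rw [← pow_le_pow_iff_left₀ (by positivity) (norm_nonneg _) two_ne_zero,
    sq_norm_sin_add_mul_I, mul_pow, div_pow, sq_sqrt zero_le_two,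
    Complex.sq_norm, normSq_add_mul_I]
  calc 2 / π ^ 2 * (x ^ 2 + y ^ 2) = (2 / π * x) ^ 2 / 2 + 2 / π ^ 2 * y ^ 2 := by ring
    _ ≤ Real.sin x ^ 2 + 1 * Real.sinh y ^ 2 := by
      gcongr ?_ + ?_
      · linarith [sq_nonneg (2 / π * x)]
      · exact mul_le_mul hπ_sq hy_sq (sq_nonneg y) zero_le_one
    _ = Real.sin x ^ 2 + Real.sinh y ^ 2 := by ring
end

section
/- For real x, y with |y| ≤ 1 and (x,y) ≠ (0,0), |Im(sin(x+iy)/(x+iy))| ≤ 2·|y|·min(|x|, 2/|x+iy|). -/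
/-!
For `z = x + iy` with `z ≠ 0`, `sin z / z = ∫₀¹ cos (t z) dt`, and
`Im cos (t z) = -sin (t x) sinh (t y)` has absolute value at most `2 |x| |y|` once `|y| ≤ 1`,
because `|sin a| ≤ |a|` and `|sinh b| ≤ 2 |b|`; this gives the bound `2 |y| |x|`.
The bound `4 |y| / |z|` comes instead from the explicit formula
`Im (sin z / z) = (x cos x sinh y - y sin x cosh y) / |z|²`, whose numerator is at most
`4 |x| |y| ≤ 4 |y| |z|` since `cosh y ≤ 2`.
-/

open Complex Real

namespace Real

theorem abs_sinh_le_two_mul_abs {s : ℝ} (hs : |s| ≤ 1) : |sinh s| ≤ 2 * |s| := by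
  have hpos := abs_exp_sub_one_le hs
  have hneg := abs_exp_sub_one_le (x := -s) (by rwa [abs_neg])
  rw [abs_neg] at hneg
  calc |sinh s| = |(exp s - 1) - (exp (-s) - 1)| / 2 := by
        rw [sinh_eq, ← abs_two, ← abs_div, abs_two]; ring_nf
    _ ≤ (|exp s - 1| + |exp (-s) - 1|) / 2 := by gcongr; exact abs_sub _ _
    _ ≤ 2 * |s| := by linarith

theorem cosh_le_two {s : ℝ} (hs : |s| ≤ 1) : cosh s ≤ 2 := by
  calc cosh s ≤ exp (s ^ 2 / 2) := cosh_le_exp_half_sq s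
    _ ≤ exp (log 2) := by
        gcongr
        nlinarith [sq_abs s, abs_nonneg s, log_two_gt_d9]
    _ = 2 := exp_log two_pos

end Real

namespace Complex

theorem sin_re (z : ℂ) : (sin z).re = Real.sin z.re * Real.cosh z.im := by
  rw [sin_eq]; simp [← ofReal_sin, ← ofReal_cos, ← ofReal_sinh, ← ofReal_cosh]

theorem sin_im (z : ℂ) : (sin z).im = Real.cos z.re * Real.sinh z.im := by
  rw [sin_eq]; simp [← ofReal_sin, ← ofReal_cos, ← ofReal_sinh, ← ofReal_cosh]

theorem cos_im (z : ℂ) : (cos z).im = -(Real.sin z.re * Real.sinh z.im) := by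
  rw [cos_eq]; simp [← ofReal_sin, ← ofReal_cos, ← ofReal_sinh, ← ofReal_cosh]

theorem sin_div_eq_integral_cos {z : ℂ} (hz : z ≠ 0) :
    sin z / z = ∫ t in (0 : ℝ)..1, cos (z * t) := by
  simp [integral_cos_mul_complex hz]

theorem abs_im_cos_le {w : ℂ} (hw : |w.im| ≤ 1) : |(cos w).im| ≤ 2 * |w.re| * |w.im| := by
  rw [cos_im, abs_neg, abs_mul]
  calc |Real.sin w.re| * |Real.sinh w.im| ≤ |w.re| * (2 * |w.im|) :=
        mul_le_mul abs_sin_le_abs (Real.abs_sinh_le_two_mul_abs hw) (abs_nonneg _) (abs_nonneg _)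
    _ = 2 * |w.re| * |w.im| := by ring

theorem abs_im_sin_div_le_two_mul {z : ℂ} (hz : |z.im| ≤ 1) :
    |(sin z / z).im| ≤ 2 * |z.re| * |z.im| := by
  rcases eq_or_ne z 0 with rfl | hz0
  · simp
  rw [sin_div_eq_integral_cos hz0, ← imCLM_apply,
    ← imCLM.intervalIntegral_comp_comm ((by fun_prop : Continuous _).intervalIntegrable _ _),
    ← Real.norm_eq_abs]
  refine (intervalIntegral.norm_integral_le_of_norm_le_const
    (C := 2 * |z.re| * |z.im|) fun t ht => ?_).trans_eq (by simp)
  obtain ⟨ht0, ht1⟩ : 0 < t ∧ t ≤ 1 := by simpa using ht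
  have hzt : |(z * t).im| ≤ |z.im| := by
    simpa [abs_mul, abs_of_pos ht0] using mul_le_of_le_one_right (abs_nonneg z.im) ht1
  have hzt' : |(z * t).re| ≤ |z.re| := by
    simpa [abs_mul, abs_of_pos ht0] using mul_le_of_le_one_right (abs_nonneg z.re) ht1
  rw [imCLM_apply, Real.norm_eq_abs]
  calc |(cos (z * t)).im| ≤ 2 * |(z * t).re| * |(z * t).im| := abs_im_cos_le (hzt.trans hz)
    _ ≤ 2 * |z.re| * |z.im| := by gcongr

theorem abs_im_sin_div_le_four_mul_div_norm {z : ℂ} (hz : |z.im| ≤ 1) :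
    |(sin z / z).im| ≤ 4 * |z.im| / ‖z‖ := by
  rcases eq_or_ne z 0 with rfl | hz0
  · simp
  have hnum : |(sin z).im * z.re - (sin z).re * z.im| ≤ 4 * |z.im| * ‖z‖ := by
    rw [sin_im, sin_re]
    have hsinh := Real.abs_sinh_le_two_mul_abs hz
    have hcosh : |Real.cosh z.im| ≤ 2 := by
      rw [abs_of_pos (Real.cosh_pos _)]; exact Real.cosh_le_two hz
    have hsin : |Real.sin z.re| ≤ ‖z‖ := abs_sin_le_abs.trans (abs_re_le_norm z)
    calc _ ≤ |Real.cos z.re| * |Real.sinh z.im| * |z.re|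
          + |Real.sin z.re| * |Real.cosh z.im| * |z.im| :=
          (abs_sub _ _).trans_eq (by simp only [abs_mul])
      _ ≤ 1 * (2 * |z.im|) * ‖z‖ + ‖z‖ * 2 * |z.im| := by
          gcongr
          · exact abs_cos_le_one _
          · exact abs_re_le_norm z
      _ = 4 * |z.im| * ‖z‖ := by ring
  have hnorm : 0 < ‖z‖ := norm_pos_iff.2 hz0
  rw [div_im, ← sub_div, abs_div, normSq_eq_norm_sq, abs_of_pos (pow_pos hnorm 2)]
  calc _ ≤ 4 * |z.im| * ‖z‖ / ‖z‖ ^ 2 := by gcongr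
    _ = 4 * |z.im| / ‖z‖ := by field_simp

end Complex

theorem stmt_4_general (x y : ℝ) (hy : |y| ≤ 1) :
    |(Complex.sin (x + y * Complex.I) / (x + y * Complex.I)).im| ≤
      2 * |y| * min |x| (2 / ‖(x + y * Complex.I : ℂ)‖) := by
  set z : ℂ := x + y * Complex.I
  have hre : z.re = x := by simp [z]
  have him : z.im = y := by simp [z]
  rw [← him] at hy
  rw [mul_min_of_nonneg _ _ (by positivity), ← hre, ← him]
  refine le_min ?_ ?_
  · exact (abs_im_sin_div_le_two_mul hy).trans_eq (by ring)
  · exact (abs_im_sin_div_le_four_mul_div_norm hy).trans_eq (by ring)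

theorem stmt_4 (x y : ℝ) (hy : |y| ≤ 1) (h : ¬(x = 0 ∧ y = 0)) :
    |(Complex.sin (x + y * Complex.I) / (x + y * Complex.I)).im| ≤
      2 * |y| * min |x| (2 / ‖(x + y * Complex.I : ℂ)‖) :=
  stmt_4_general x y hy
end

section
/- Let 0 < ε ≤ 1 and let x, y be real with |εx| ≤ π and |y| ≤ 2. Then |sin((x+iy)/2) / ((1/ε)·sin(ε(x+iy)/2))| ≤ 4·min(1, 2/|x|), where for x = 0 the minimum is interpreted as 4. -/
/-!
Write `w = (x + iy)/2`, so that `|Re (εw)| ≤ π/2` and `|Im w| ≤ 1`. Since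
`‖sin (a + ib)‖² = sin² a + sinh² b`, Jordan's inequality and `|sinh b| ≥ |b|` give
`‖sin (εw)‖ ≥ (2/π) ε ‖w‖`, while `|sinh b| ≤ |b| cosh b` gives `‖sin w‖ ≤ ‖w‖ cosh (Im w)`,
and trivially `‖sin w‖ ≤ cosh (Im w)`, with `cosh (Im w) ≤ cosh 1 ≤ 2`. Hence both
`ε ‖sin w‖` and `ε (|x|/2) ‖sin w‖` are at most `π ‖sin (εw)‖ ≤ 4 ‖sin (εw)‖`.
-/

open Complex Real

theorem Real.sinh_le_mul_cosh {t : ℝ} (ht : 0 ≤ t) : Real.sinh t ≤ t * Real.cosh t := by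
  refine hasSum_le (fun n => ?_) (Real.hasSum_sinh t) ((Real.hasSum_cosh t).mul_left t)
  rw [pow_succ', mul_div_assoc]
  gcongr
  omega

theorem Real.abs_sinh_le_mul_cosh (t : ℝ) : |Real.sinh t| ≤ |t| * Real.cosh t := by
  rw [Real.abs_sinh, ← Real.cosh_abs]
  exact Real.sinh_le_mul_cosh (abs_nonneg t)

theorem Real.cosh_one_le_two : Real.cosh 1 ≤ 2 := by
  have he : Real.exp 1 < 2.7182818286 := Real.exp_one_lt_d9
  have he' : Real.exp (-1) ≤ 1 := Real.exp_le_one_iff.2 (by norm_num)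
  rw [Real.cosh_eq]
  linarith

theorem Complex.norm_sin_sq (z : ℂ) :
    ‖Complex.sin z‖ ^ 2 = Real.sin z.re ^ 2 + Real.sinh z.im ^ 2 := by
  have h : Complex.sin z = ((Real.sin z.re * Real.cosh z.im : ℝ) : ℂ) +
      ((Real.cos z.re * Real.sinh z.im : ℝ) : ℂ) * I := by
    rw [Complex.sin_eq]
    push_cast
    ring
  rw [h, Complex.sq_norm, Complex.normSq_add_mul_I]
  nlinarith [Real.sin_sq_add_cos_sq z.re, Real.cosh_sq z.im]

theorem Complex.sq_norm_eq_sq_re_add_sq_im (z : ℂ) : ‖z‖ ^ 2 = z.re ^ 2 + z.im ^ 2 := by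
  rw [Complex.sq_norm, Complex.normSq_apply]
  ring

theorem Complex.norm_sin_le_cosh_im (z : ℂ) : ‖Complex.sin z‖ ≤ Real.cosh z.im := by
  rw [← sq_le_sq₀ (norm_nonneg _) (Real.cosh_pos _).le, Complex.norm_sin_sq, Real.cosh_sq']
  gcongr
  exact Real.sin_sq_le_one _

theorem Complex.norm_sin_le_norm_mul_cosh_im (z : ℂ) :
    ‖Complex.sin z‖ ≤ ‖z‖ * Real.cosh z.im := by
  have hre : Real.sin z.re ^ 2 ≤ z.re ^ 2 * Real.cosh z.im ^ 2 :=
    Real.sin_sq_le_sq.trans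
    (le_mul_of_one_le_right (sq_nonneg _) (one_le_pow₀ (Real.one_le_cosh _)))
  have him : Real.sinh z.im ^ 2 ≤ z.im ^ 2 * Real.cosh z.im ^ 2 := by
    rw [← sq_abs, ← sq_abs z.im, ← mul_pow]
    exact pow_le_pow_left₀ (abs_nonneg _) (Real.abs_sinh_le_mul_cosh _) 2
  rw [← sq_le_sq₀ (norm_nonneg _) (by positivity), Complex.norm_sin_sq, mul_pow,
    Complex.sq_norm_eq_sq_re_add_sq_im]
  linarith

theorem Complex.two_div_pi_mul_norm_le_norm_sin {z : ℂ} (hz : |z.re| ≤ π / 2) :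
    2 / π * ‖z‖ ≤ ‖Complex.sin z‖ := by
  have hre : (2 / π * z.re) ^ 2 ≤ Real.sin z.re ^ 2 := by
    rw [← sq_abs (Real.sin _), ← sq_abs, abs_mul, abs_of_pos (by positivity)]
    exact pow_le_pow_left₀ (by positivity) (Real.mul_abs_le_abs_sin hz) 2
  have him : (2 / π * z.im) ^ 2 ≤ Real.sinh z.im ^ 2 := by
    have hc : 2 / π ≤ 1 := by
      rw [div_le_one Real.pi_pos]; linarith [Real.pi_gt_three]
    rw [← sq_abs (Real.sinh _), ← sq_abs, abs_mul, abs_of_pos (by positivity), Real.abs_sinh]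
    refine pow_le_pow_left₀ (by positivity) ?_ 2
    calc 2 / π * |z.im| ≤ |z.im| := mul_le_of_le_one_left (abs_nonneg _) hc
      _ ≤ Real.sinh |z.im| := Real.self_le_sinh_iff.2 (abs_nonneg _)
  rw [← sq_le_sq₀ (by positivity) (norm_nonneg _), Complex.norm_sin_sq, mul_pow,
    Complex.sq_norm_eq_sq_re_add_sq_im]
  linarith

section ScaledSine

variable {ε : ℝ} {w : ℂ}

theorem two_mul_mul_norm_le_pi_mul_norm_sin_mul (hε : 0 ≤ ε) (hre : |ε * w.re| ≤ π / 2) :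
    2 * (ε * ‖w‖) ≤ π * ‖Complex.sin (ε * w)‖ := by
  have h := Complex.two_div_pi_mul_norm_le_norm_sin (z := ε * w) (by simpa using hre)
  rw [norm_mul, Complex.norm_real, Real.norm_of_nonneg hε, div_mul_eq_mul_div,
    div_le_iff₀ Real.pi_pos] at h
  linarith

theorem cosh_im_le_two (him : |w.im| ≤ 1) : Real.cosh w.im ≤ 2 :=
  (Real.cosh_le_cosh.2 (by simpa using him)).trans Real.cosh_one_le_two

theorem mul_norm_sin_le_pi_mul_norm_sin_mul (hε : 0 ≤ ε) (him : |w.im| ≤ 1)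
    (hre : |ε * w.re| ≤ π / 2) : ε * ‖Complex.sin w‖ ≤ π * ‖Complex.sin (ε * w)‖ :=
  calc ε * ‖Complex.sin w‖ ≤ ε * (‖w‖ * 2) := by
        gcongr
        exact (Complex.norm_sin_le_norm_mul_cosh_im w).trans
          (by gcongr; exact cosh_im_le_two him)
    _ = 2 * (ε * ‖w‖) := by ring
    _ ≤ π * ‖Complex.sin (ε * w)‖ := two_mul_mul_norm_le_pi_mul_norm_sin_mul hε hre

theorem mul_abs_re_mul_norm_sin_le_pi_mul_norm_sin_mul (hε : 0 ≤ ε) (him : |w.im| ≤ 1)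
    (hre : |ε * w.re| ≤ π / 2) :
    ε * |w.re| * ‖Complex.sin w‖ ≤ π * ‖Complex.sin (ε * w)‖ :=
  calc ε * |w.re| * ‖Complex.sin w‖ ≤ ε * ‖w‖ * 2 := by
        gcongr
        · exact Complex.abs_re_le_norm w
        · exact (Complex.norm_sin_le_cosh_im w).trans (cosh_im_le_two him)
    _ = 2 * (ε * ‖w‖) := by ring
    _ ≤ π * ‖Complex.sin (ε * w)‖ := two_mul_mul_norm_le_pi_mul_norm_sin_mul hε hre

end ScaledSine

theorem stmt_7_general (ε x y : ℝ) (hε0 : 0 < ε)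
    (hx : |ε * x| ≤ Real.pi) (hy : |y| ≤ 2) :
    ‖Complex.sin ((x + y * Complex.I) / 2) /
        ((1 / (ε : ℂ)) * Complex.sin ((ε : ℂ) * (x + y * Complex.I) / 2))‖ ≤
      4 * (if x = 0 then 1 else min 1 (2 / |x|)) := by
  set w : ℂ := (x + y * Complex.I) / 2 with hw
  have hwre : w.re = x / 2 := by simp [hw]
  have hwim : w.im = y / 2 := by simp [hw]
  have him : |w.im| ≤ 1 := by rw [hwim, abs_div, abs_two]; linarith
  have hre : |ε * w.re| ≤ π / 2 := by
    rw [hwre, ← mul_div_assoc, abs_div, abs_two]; linarith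
  have hπ : π ≤ 4 := Real.pi_le_four
  set B := ‖Complex.sin (ε * w)‖
  have hB : 0 ≤ B := norm_nonneg _
  have h₁ : ε * ‖Complex.sin w‖ ≤ 4 * B :=
    (mul_norm_sin_le_pi_mul_norm_sin_mul hε0.le him hre).trans (by gcongr)
  have h₂ := mul_abs_re_mul_norm_sin_le_pi_mul_norm_sin_mul hε0.le him hre
  rw [mul_div_assoc, one_div, ← div_eq_inv_mul, div_div_eq_mul_div, norm_div, norm_mul,
    Complex.norm_real, Real.norm_of_nonneg hε0.le, mul_comm]
  refine div_le_of_le_mul₀ hB (by positivity) ?_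
  split_ifs with hx0
  · simpa using h₁
  · have hxpos : 0 < |x| := abs_pos.2 hx0
    rw [mul_min_of_nonneg _ _ (by norm_num), min_mul_of_nonneg _ _ hB]
    refine le_min (by simpa using h₁) ?_
    rw [hwre, abs_div, abs_two] at h₂
    have hπB : π * B ≤ 4 * B := by gcongr
    rw [show 4 * (2 / |x|) * B = 8 * B / |x| by ring, le_div_iff₀ hxpos]
    linarith

theorem stmt_7 (ε x y : ℝ) (hε0 : 0 < ε) (hε1 : ε ≤ 1)
    (hx : |ε * x| ≤ Real.pi) (hy : |y| ≤ 2) :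
    ‖Complex.sin ((x + y * Complex.I) / 2) /
        ((1 / (ε : ℂ)) * Complex.sin ((ε : ℂ) * (x + y * Complex.I) / 2))‖ ≤
      4 * (if x = 0 then 1 else min 1 (2 / |x|)) :=
  stmt_7_general ε x y hε0 hx hy
end
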